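/- Let Σ be an m×m positive definite matrix with eigenvalues σ_1 ≥ ... ≥ σ_m > 0, let τ > 0, and let γ = (m-1)·σ_m·τ²/(σ_m·m² + τ²). Then tr(Σ²(Σ + γI_m)^{-1}) - tr(Σ²(Σ + (τ²/m)I_m)^{-1}) ≤ min{σ_1/(m·σ_m), 1} · tr((Σ^{-1} + (m/τ²)I_m)^{-1}). -/

import Mathlib

/-!
All three matrices are functions of `S` in the continuous functional calculus, so each trace is
a sum `∑ j, f (σ j)` and the claim reduces to one scalar inequality per eigenvalue. With
`u = τ² / m` and `H(s, c) = (s⁻¹ + c⁻¹)⁻¹`, the `j`-th term on the left is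
`H(σ j, u) - H(σ j, γ) ≤ H(σ j, u)`. Since `γ (σmin m + u) = (m - 1) σmin u`, the same term is
`σ j (σmin + u) / ((σ j + γ) (σmin m + u))` times `H(σ j, u)`, and this factor is at most
`σmax / (m σmin)`.
-/

open Matrix Finset

namespace Matrix.IsHermitian

variable {n 𝕜 : Type*} [RCLike 𝕜] [Fintype n] [DecidableEq n] {A : Matrix n n 𝕜}

lemma continuousOn_spectrum (hA : A.IsHermitian) (f : ℝ → ℝ) :
    ContinuousOn f (spectrum ℝ A) :=
  (hA.spectrum_real_eq_range_eigenvalues ▸ Set.finite_range _).continuousOn f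

lemma trace_cfc (hA : A.IsHermitian) (f : ℝ → ℝ) :
    (cfc f A).trace = ∑ i, (f (hA.eigenvalues i) : 𝕜) := by
  rw [hA.cfc_eq, IsHermitian.cfc, Unitary.conjStarAlgAut_apply, trace_mul_cycle,
    Unitary.coe_star_mul_self, one_mul, trace_diagonal]
  rfl

lemma cfc_add_smul_one_inv (hA : A.IsHermitian) (f : ℝ → ℝ) {c : ℝ}
    (hf : ∀ x ∈ spectrum ℝ A, f x + c ≠ 0) :
    (cfc f A + c • 1)⁻¹ = cfc (fun x ↦ (f x + c)⁻¹) A := by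
  rw [cfc_inv _ A hf (hA.continuousOn_spectrum _) hA.isSelfAdjoint,
    cfc_add_const c f A (hA.continuousOn_spectrum f) hA.isSelfAdjoint,
    nonsing_inv_eq_ringInverse, Algebra.algebraMap_eq_smul_one]

lemma sq_mul_add_smul_one_inv (hA : A.IsHermitian) {c : ℝ}
    (hc : ∀ x ∈ spectrum ℝ A, x + c ≠ 0) :
    A ^ 2 * (A + c • 1)⁻¹ = cfc (fun x ↦ x ^ 2 / (x + c)) A := by
  conv_lhs => rw [← cfc_id' ℝ A hA.isSelfAdjoint]
  rw [cfc_add_smul_one_inv hA _ hc,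
    ← cfc_pow _ 2 A (hA.continuousOn_spectrum _) hA.isSelfAdjoint,
    ← cfc_mul _ _ A (hA.continuousOn_spectrum _) (hA.continuousOn_spectrum _)]
  rfl

lemma inv_add_smul_one_inv (hA : A.IsHermitian) {c : ℝ}
    (h0 : ∀ x ∈ spectrum ℝ A, x ≠ 0) (hc : ∀ x ∈ spectrum ℝ A, x⁻¹ + c ≠ 0) :
    (A⁻¹ + c • 1)⁻¹ = cfc (fun x ↦ (x⁻¹ + c)⁻¹) A := by
  rw [← cfc_add_smul_one_inv hA _ hc, show (Inv.inv : ℝ → ℝ) = fun x ↦ (id x)⁻¹ from rfl,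
    cfc_inv id A h0 (hA.continuousOn_spectrum _) hA.isSelfAdjoint, cfc_id ℝ A hA.isSelfAdjoint]
  simp only [nonsing_inv_eq_ringInverse]

end Matrix.IsHermitian

lemma Matrix.PosDef.pos_of_mem_spectrum {n : Type*} [Fintype n] [DecidableEq n]
    {S : Matrix n n ℝ} (hS : S.PosDef) {x : ℝ} (hx : x ∈ spectrum ℝ S) : 0 < x := by
  obtain ⟨i, rfl⟩ := hS.isHermitian.spectrum_real_eq_range_eigenvalues ▸ hx
  exact hS.eigenvalues_pos i

lemma sq_div_add_sub_sq_div_add_le {s g u : ℝ} (hs : 0 < s) (hg : 0 ≤ g) (hu : 0 < u) :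
    s ^ 2 / (s + g) - s ^ 2 / (s + u) ≤ (s⁻¹ + u⁻¹)⁻¹ := by
  rw [_root_.inv_add_inv hs.ne' hu.ne', inv_div, div_sub_div _ _ (by positivity) (by positivity),
    div_le_div_iff₀ (by positivity) (by positivity)]
  nlinarith [mul_nonneg (mul_nonneg hs.le hg) (sq_nonneg (s + u))]

lemma sq_div_add_sub_sq_div_add_le_mul {m u smin smax s : ℝ} (hm : 1 ≤ m) (hu : 0 < u)
    (hmin : 0 < smin) (h1 : smin ≤ s) (h2 : s ≤ smax) :
    s ^ 2 / (s + (m - 1) * smin * u / (smin * m + u)) - s ^ 2 / (s + u) ≤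
      smax / (m * smin) * (s⁻¹ + u⁻¹)⁻¹ := by
  have hs : 0 < s := hmin.trans_le h1
  have hD : 0 < smin * m + u := by positivity
  have hg0 : 0 ≤ (m - 1) * smin * u / (smin * m + u) := by
    have := sub_nonneg.2 hm
    positivity
  have hgD := div_mul_cancel₀ ((m - 1) * smin * u) hD.ne'
  generalize (m - 1) * smin * u / (smin * m + u) = g at hg0 hgD ⊢
  have hsg : 0 < s + g := by positivity
  have hgap : s ^ 2 / (s + g) - s ^ 2 / (s + u) =
      s * (smin + u) / ((s + g) * (smin * m + u)) * (s⁻¹ + u⁻¹)⁻¹ := by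
    rw [_root_.inv_add_inv hs.ne' hu.ne', inv_div, div_sub_div _ _ hsg.ne' (by positivity),
      div_mul_div_comm, div_eq_div_iff (by positivity) (by positivity)]
    linear_combination -s ^ 2 * (s + g) * (s + u) * hgD
  have hX : (s + g) * (smin * m + u) = s * (smin * m + u) + (m - 1) * smin * u := by
    linear_combination hgD
  have hX0 : 0 ≤ s * (smin * m + u) + (m - 1) * smin * u := by
    have := sub_nonneg.2 hm
    positivity
  rw [hgap]
  refine mul_le_mul_of_nonneg_right ?_ (by positivity)
  rw [div_le_div_iff₀ (by positivity) (by positivity), hX]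
  nlinarith [mul_le_mul_of_nonneg_right h2 hX0,
    mul_nonneg (mul_nonneg hs.le (sub_nonneg.2 h1)) hD.le]

theorem stmt_17 (m : ℕ) (hm : 0 < m) (S : Matrix (Fin m) (Fin m) ℝ) (hS : S.PosDef)
    (τ : ℝ) (hτ : 0 < τ) :
    letI σ : Fin m → ℝ := hS.posSemidef.isHermitian.eigenvalues
    letI σmax : ℝ := ⨆ j, σ j
    letI σmin : ℝ := ⨅ j, σ j
    letI γ : ℝ := ((m : ℝ) - 1) * σmin * τ ^ 2 / (σmin * (m : ℝ) ^ 2 + τ ^ 2)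
    (S ^ 2 * (S + γ • (1 : Matrix (Fin m) (Fin m) ℝ))⁻¹).trace -
        (S ^ 2 * (S + (τ ^ 2 / m) • (1 : Matrix (Fin m) (Fin m) ℝ))⁻¹).trace ≤
      min (σmax / ((m : ℝ) * σmin)) 1 *
        ((S⁻¹ + ((m : ℝ) / τ ^ 2) • (1 : Matrix (Fin m) (Fin m) ℝ))⁻¹).trace := by
  have hS' : S.IsHermitian := hS.posSemidef.isHermitian
  set σ : Fin m → ℝ := hS.posSemidef.isHermitian.eigenvalues
  set σmax : ℝ := ⨆ j, σ j
  set σmin : ℝ := ⨅ j, σ j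
  set γ : ℝ := ((m : ℝ) - 1) * σmin * τ ^ 2 / (σmin * (m : ℝ) ^ 2 + τ ^ 2) with hγ_def
  have : Nonempty (Fin m) := Fin.pos_iff_nonempty.mp hm
  have hmin_le (j : Fin m) : σmin ≤ σ j := ciInf_le (Set.finite_range σ).bddBelow j
  have hle_max (j : Fin m) : σ j ≤ σmax := le_ciSup (Set.finite_range σ).bddAbove j
  have hσmin : 0 < σmin := by
    obtain ⟨j, hj⟩ := exists_eq_ciInf_of_finite (f := σ)
    exact (hS.eigenvalues_pos j).trans_eq hj
  have hm1 : (1 : ℝ) ≤ m := by exact_mod_cast hm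
  have hu : 0 < τ ^ 2 / m := by positivity
  have hγ : γ = (m - 1) * σmin * (τ ^ 2 / m) / (σmin * m + τ ^ 2 / m) := by
    rw [hγ_def]
    field_simp
  have hγ0 : 0 ≤ γ := by
    have := sub_nonneg.2 hm1
    rw [hγ]
    positivity
  have hspec {x : ℝ} (hx : x ∈ spectrum ℝ S) : 0 < x := hS.pos_of_mem_spectrum hx
  rw [hS'.sq_mul_add_smul_one_inv fun x hx ↦ (add_pos_of_pos_of_nonneg (hspec hx) hγ0).ne',
    hS'.sq_mul_add_smul_one_inv fun x hx ↦ (add_pos (hspec hx) hu).ne',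
    hS'.inv_add_smul_one_inv (fun x hx ↦ (hspec hx).ne')
      fun x hx ↦ (add_pos (inv_pos.2 (hspec hx)) (by positivity)).ne',
    hS'.trace_cfc, hS'.trace_cfc, hS'.trace_cfc, ← sum_sub_distrib, mul_sum]
  simp only [RCLike.ofReal_real_eq_id, id]
  refine sum_le_sum fun j _ ↦ ?_
  rw [min_mul_of_nonneg _ _ (by positivity [hS.eigenvalues_pos j]), one_mul,
    ← inv_div (τ ^ 2) (m : ℝ)]
  exact le_min (hγ ▸ sq_div_add_sub_sq_div_add_le_mul hm1 hu hσmin (hmin_le j) (hle_max j))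
    (sq_div_add_sub_sq_div_add_le (hS.eigenvalues_pos j) hγ0 hu)
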